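/- Let D = (L, R, A, ‾) be an ABA framework and D' = (L, R ∪ {r}, A, ‾) for a rule r of the form a ← M with M ∪ {a} ⊆ A (a rule deriving an assumption from assumptions). Then S is a stable extension of D' if and only if (i) S is a stable extension of D and (ii) M ⊄ S or a ∈ S. That is, adding a non-flat rule a ← M under stable semantics amounts to imposing the denial integrity constraint 'not (M ⊆ S and a ∉ S)'. -/
import Mathlib


/- Literals: atoms and naf-negated atoms -/
inductive Lit (α : Type) where
  | pos : α → Lit α
  | neg : α → Lit α
deriving DecidableEq

/- A rule with a head sentence and a finite body of sentences -/
structure ABARule (σ : Type) where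
  head : σ
  body : Finset σ

/- A logic program with naf in the head: rules over literals -/
abbrev LP (α : Type) := Set (ABARule (Lit α))

/-- Herbrand base: atoms occurring in P -/
def HB {α : Type} (P : LP α) : Set α :=
  {a | ∃ r ∈ P, r.head = Lit.pos a ∨ r.head = Lit.neg a ∨ Lit.pos a ∈ r.body ∨ Lit.neg a ∈ r.body}

/-- Δ(I) = {not p | p ∈ HB_P, p ∉ I} -/
def DeltaSet {α : Type} (P : LP α) (I : Set α) : Set (Lit α) :=
  {l | ∃ p, p ∈ HB P ∧ p ∉ I ∧ l = Lit.neg p}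

/- Positive program rules: possibly empty head (constraints) -/
structure PosRule (α : Type) where
  head : Option α
  body : Set α

def bodyPos {α : Type} (r : ABARule (Lit α)) : Set α := {a | Lit.pos a ∈ r.body}
def bodyNeg {α : Type} (r : ABARule (Lit α)) : Set α := {a | Lit.neg a ∈ r.body}
def headPos {α : Type} (r : ABARule (Lit α)) : Option α :=
  match r.head with
  | .pos a => some a
  | .neg _ => none
def headNeg {α : Type} (r : ABARule (Lit α)) : Set α := {a | r.head = Lit.neg a}

/-- The reduct P^I -/
def reduct {α : Type} (P : LP α) (I : Set α) : Set (PosRule α) :=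
  {q | ∃ r ∈ P, bodyNeg r ∩ I = ∅ ∧ headNeg r ⊆ I ∧ q = ⟨headPos r, bodyPos r⟩}

/-- Conditions (a) and (b): J is a (supported) Herbrand model of a positive program Q -/
def SatModel {α : Type} (Q : Set (PosRule α)) (J : Set α) : Prop :=
  (∀ p, p ∈ J ↔ ∃ q ∈ Q, q.head = some p ∧ q.body ⊆ J) ∧
  (∀ q ∈ Q, q.head = none → ¬ q.body ⊆ J)

/-- Stable model: ⊆-minimal set of atoms satisfying (a) and (b) w.r.t. P^I -/
def StableModel {α : Type} (P : LP α) (I : Set α) : Prop :=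
  I ⊆ HB P ∧ SatModel (reduct P I) I ∧ ∀ J ⊆ I, SatModel (reduct P I) J → J = I

/-- Derivability in a positive program -/
inductive PosDeriv {α : Type} (Q : Set (PosRule α)) : α → Prop
  | step {q : PosRule α} {a : α} : q ∈ Q → q.head = some a →
      (∀ b ∈ q.body, PosDeriv Q b) → PosDeriv Q a

/-- Tree-derivability of a sentence from (a subset of) the assumption set S using rules R -/
inductive Deriv {σ : Type} (R : Set (ABARule σ)) (S : Set σ) : σ → Prop
  | assum {s : σ} : s ∈ S → Deriv R S s
  | step {r : ABARule σ} : r ∈ R → (∀ b ∈ r.body, Deriv R S b) → Deriv R S r.head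

/- Assumption-based argumentation frameworks -/
structure ABAF (σ : Type) where
  L : Set σ
  R : Set (ABARule σ)
  A : Set σ
  co : σ → σ

def ThSet {σ : Type} (D : ABAF σ) (S : Set σ) : Set σ := {p | Deriv D.R S p}

def ConflictFree {σ : Type} (D : ABAF σ) (S : Set σ) : Prop :=
  ∀ a ∈ S, ¬ Deriv D.R S (D.co a)

def ABAClosed {σ : Type} (D : ABAF σ) (S : Set σ) : Prop :=
  ∀ a ∈ D.A, Deriv D.R S a → a ∈ S

/-- Stable extensions: closed conflict-free sets attacking every outside assumption -/
def StableExt {σ : Type} (D : ABAF σ) (S : Set σ) : Prop :=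
  S ⊆ D.A ∧ ConflictFree D S ∧ ABAClosed D S ∧
    ∀ x ∈ D.A, x ∉ S → Deriv D.R S (D.co x)

/-- Set-stable extensions: attack the closure cl({x}) of every outside assumption -/
def SetStableExt {σ : Type} (D : ABAF σ) (S : Set σ) : Prop :=
  S ⊆ D.A ∧ ConflictFree D S ∧ ABAClosed D S ∧
    ∀ x ∈ D.A, x ∉ S → ∃ b ∈ D.A, Deriv D.R {x} b ∧ Deriv D.R S (D.co b)

/-- The ABA framework D_P corresponding to an LP P -/
def ABAFofLP {α : Type} (P : LP α) : ABAF (Lit α) :=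
  { L := {l | ∃ p ∈ HB P, l = Lit.pos p ∨ l = Lit.neg p}
    R := P
    A := {l | ∃ p ∈ HB P, l = Lit.neg p}
    co := fun l => match l with
      | .pos p => Lit.pos p
      | .neg p => Lit.pos p }

/-- The LP-ABA fragment: no assumption is a contrary, contrary injective, L = A ∪ Ā
    (together with well-formedness of rules and contraries w.r.t. the language) -/
def IsLPABA {σ : Type} (D : ABAF σ) : Prop :=
  (∀ r ∈ D.R, r.head ∈ D.L ∧ ∀ b ∈ r.body, b ∈ D.L) ∧
  D.A ⊆ D.L ∧
  (∀ a ∈ D.A, D.co a ∉ D.A) ∧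
  Set.InjOn D.co D.A ∧
  D.L = D.A ∪ D.co '' D.A

open Classical in
/-- rep(a) = not ā for assumptions, rep(s) = s (as an atom) otherwise -/
noncomputable def repLit {σ : Type} (D : ABAF σ) (s : σ) : Lit σ :=
  if s ∈ D.A then Lit.neg (D.co s) else Lit.pos s

noncomputable def repRule {σ : Type} [DecidableEq σ] (D : ABAF σ) (r : ABARule σ) :
    ABARule (Lit σ) :=
  ⟨repLit D r.head, r.body.image (repLit D)⟩

/-- The LP P_D associated with an (LP-)ABAF D -/
noncomputable def LPofABAF {σ : Type} [DecidableEq σ] (D : ABAF σ) : LP σ :=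
  (repRule D) '' D.R

/-- One-step support operator -/
def suppOp {α : Type} (P : LP α) (S : Set (Lit α)) : Set (Lit α) :=
  S ∪ {l | ∃ r ∈ P, r.head = l ∧ ∀ b ∈ r.body, b ∈ S}

/-- Closure cl(S) = ⋃_{i>0} suppⁱ(S) -/
def clLP {α : Type} (P : LP α) (S : Set (Lit α)) : Set (Lit α) :=
  ⋃ i : ℕ, (suppOp P)^[i + 1] S

/-- The set-stable reduct P^I_s = P^I ∪ {a ← b | a ≠ b, not b ∈ cl({not a})} -/
def sReduct {α : Type} (P : LP α) (I : Set α) : Set (PosRule α) :=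
  reduct P I ∪
    {q | ∃ a b, a ∈ HB P ∧ b ∈ HB P ∧ a ≠ b ∧ Lit.neg b ∈ clLP P {Lit.neg a} ∧
        q = ⟨some a, {b}⟩}

/-- Set-stable models -/
def SetStableModel {α : Type} (P : LP α) (I : Set α) : Prop :=
  I ⊆ HB P ∧ SatModel (sReduct P I) I ∧ ∀ J ⊆ I, SatModel (sReduct P I) J → J = I

/-- Bipolar LPs: each rule body is a single naf-literal -/
def IsBipolarLP {α : Type} (P : LP α) : Prop :=
  ∀ r ∈ P, ∃ b, r.body = {Lit.neg b}

/-- All (positive and naf) literals over the Herbrand base of P -/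
def LitsOf {α : Type} (P : LP α) : Set (Lit α) :=
  {l | ∃ p ∈ HB P, l = Lit.pos p ∨ l = Lit.neg p}

lemma deriv_mono' {σ : Type} {R R' : Set (ABARule σ)} (h : R ⊆ R') {S : Set σ} {p : σ}
    (hd : Deriv R S p) : Deriv R' S p := by
  induction hd with
  | assum hs => exact .assum hs
  | step hr _ ih => exact .step (h hr) ih

lemma deriv_insert {σ : Type} {R : Set (ABARule σ)} {r : ABARule σ} {S : Set σ}
    (hr : (∀ b ∈ r.body, Deriv R S b) → Deriv R S r.head)
    {p : σ} (hd : Deriv (insert r R) S p) : Deriv R S p := by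
  induction hd with
  | assum hs => exact .assum hs
  | step hq _ ih =>
    rcases Set.mem_insert_iff.mp hq with rfl | hq
    · exact hr ih
    · exact .step hq ih

/-- adding a non-flat rule a ← M (with M ∪ {a} ⊆ A) to an ABAF D acts as
    a denial integrity constraint: S is stable in D' iff S is stable in D and it is not
    the case that M ⊆ S and a ∉ S. -/
theorem stmt9 {σ : Type} (D : ABAF σ) (r : ABARule σ)
    (hhead : r.head ∈ D.A) (hbody : ∀ b ∈ r.body, b ∈ D.A) (S : Set σ) :
    StableExt { D with R := insert r D.R } S ↔
      (StableExt D S ∧ (¬ (↑r.body : Set σ) ⊆ S ∨ r.head ∈ S)) := by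
  have hsub : D.R ⊆ insert r D.R := Set.subset_insert _ _
  constructor
  · rintro ⟨hSA, hcf, hcl, hatt⟩
    by_cases hb : (↑r.body : Set σ) ⊆ S
    · have hhS : r.head ∈ S := hcl r.head hhead
        (Deriv.step (Set.mem_insert _ _) (fun b hb' => Deriv.assum (hb hb')))
      have key : ∀ p, Deriv (insert r D.R) S p → Deriv D.R S p :=
        fun p => deriv_insert (fun _ => .assum hhS)
      exact ⟨⟨hSA,
        fun a ha hd => hcf a ha (deriv_mono' hsub hd),
        fun a ha hd => hcl a ha (deriv_mono' hsub hd),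
        fun x hx hxs => key _ (hatt x hx hxs)⟩, Or.inr hhS⟩
    · have key : ∀ p, Deriv (insert r D.R) S p → Deriv D.R S p := by
        intro p
        refine deriv_insert (fun h => absurd (fun b hb' => ?_) hb)
        exact hcl b (hbody b hb') (deriv_mono' hsub (h b hb'))
      exact ⟨⟨hSA,
        fun a ha hd => hcf a ha (deriv_mono' hsub hd),
        fun a ha hd => hcl a ha (deriv_mono' hsub hd),
        fun x hx hxs => key _ (hatt x hx hxs)⟩, Or.inl hb⟩
  · rintro ⟨⟨hSA, hcf, hcl, hatt⟩, hcond⟩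
    have key : ∀ p, Deriv (insert r D.R) S p → Deriv D.R S p := by
      intro p
      rcases hcond with hb | hhS
      · refine deriv_insert (fun h => absurd (fun b hb' => ?_) hb)
        exact hcl b (hbody b hb') (h b hb')
      · exact deriv_insert (fun _ => .assum hhS)
    exact ⟨hSA,
      fun a ha hd => hcf a ha (key _ hd),
      fun a ha hd => hcl a ha (key _ hd),
      fun x hx hxs => deriv_mono' hsub (hatt x hx hxs)⟩
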